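/- Let M ≥ 1 and let P ∈ 𝒫_M. Then for every u ∈ W^{1,p}, the function t ↦ P(u(t), I^α[u](t), u̇(t), ᶜD^α[u](t), t) belongs to L^M(a,b;ℝ). -/

import Mathlib

open MeasureTheory Set
open scoped ENNReal

/-- The left Riemann–Liouville fractional integral of order `α` with base point `a`:
`I^α[f](t) = (1/Γ(α)) ∫_a^t (t-y)^(α-1) f(y) dy`. -/
noncomputable def RL {d : ℕ} (a α : ℝ) (f : ℝ → EuclideanSpace ℝ (Fin d)) (t : ℝ) :
    EuclideanSpace ℝ (Fin d) :=
  (1 / Real.Gamma α) • ∫ y in Ioo a t, ((t - y) ^ (α - 1)) • f y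

/-- `u ∈ W^{1,p}(a,b;ℝ^d)` with derivative `v`: `v ∈ L^p` and
`u(t) = u(a) + ∫_a^t v(s) ds` for all `t ∈ [a,b]`. -/
def IsW1p {d : ℕ} (a b p : ℝ) (u v : ℝ → EuclideanSpace ℝ (Fin d)) : Prop :=
  MemLp v (ENNReal.ofReal p) (volume.restrict (Ioo a b)) ∧
  ∀ t ∈ Icc a b, u t = u a + ∫ s in Ioo a t, v s

/-- `P ∈ 𝒫_M`: `P(x1,x2,x3,x4,t) = Σ_{k=0}^N c_k(x1,t) ‖x2‖^{d_{2,k}} ‖x3‖^{d_{3,k}} ‖x4‖^{d_{4,k}}`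
on `(ℝ^d)^4 × [a,b]`, with `c_k ≥ 0` continuous and `0 ≤ d_{i,k}`,
`d_{2,k} + d_{3,k} + d_{4,k} ≤ p/M`. -/
def MemP {d : ℕ} (a b p M : ℝ)
    (P : EuclideanSpace ℝ (Fin d) → EuclideanSpace ℝ (Fin d) → EuclideanSpace ℝ (Fin d) →
      EuclideanSpace ℝ (Fin d) → ℝ → ℝ) : Prop :=
  ∃ (N : ℕ) (c : ℕ → EuclideanSpace ℝ (Fin d) → ℝ → ℝ) (d2 d3 d4 : ℕ → ℝ),
    (∀ k, k ≤ N → ContinuousOn (fun q : EuclideanSpace ℝ (Fin d) × ℝ => c k q.1 q.2)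
        (univ ×ˢ Icc a b)) ∧
    (∀ k, k ≤ N → ∀ x t, 0 ≤ c k x t) ∧
    (∀ k, k ≤ N → 0 ≤ d2 k ∧ 0 ≤ d3 k ∧ 0 ≤ d4 k ∧ d2 k + d3 k + d4 k ≤ p / M) ∧
    (∀ x1 x2 x3 x4 : EuclideanSpace ℝ (Fin d), ∀ t ∈ Icc a b,
      P x1 x2 x3 x4 t =
        ∑ k ∈ Finset.range (N + 1), c k x1 t * ‖x2‖ ^ d2 k * ‖x3‖ ^ d3 k * ‖x4‖ ^ d4 k)

/-!
Each monomial of `P` is `c_k(u, t) ‖I^α u‖^{d₂} ‖u̇‖^{d₃} ‖ᶜD^α u‖^{d₄}`. Since `u` is absolutely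
continuous it is continuous on `[a, b]`, so `c_k(u(t), t)` is bounded and `u ∈ L^p`. On `(a, b)` the
operator `I^β` is a convolution with the integrable kernel `s^{β-1} 1_{(0, b-a)}`, so by Young's
inequality it maps `L^p` into `L^p`; hence `I^α u`, `u̇` and `ᶜD^α u = I^{1-α} u̇` all lie in `L^p`.
By Hölder, `‖f‖^{dᵢ} ∈ L^{p/dᵢ}` multiply to an element of `L^{p/(d₂+d₃+d₄)} ⊆ L^M`.
-/

/-- Jensen's inequality for `x ↦ x ^ p` with respect to the weight `w`. -/
theorem lintegral_mul_rpow_le {X : Type*} [MeasurableSpace X] {μ : Measure X} {p : ℝ}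
    (hp : 1 < p) {w g : X → ℝ≥0∞} (hw : AEMeasurable w μ) (hg : AEMeasurable g μ) :
    (∫⁻ x, w x * g x ∂μ) ^ p ≤ (∫⁻ x, w x ∂μ) ^ (p - 1) * ∫⁻ x, w x * g x ^ p ∂μ := by
  set q := p.conjExponent
  have hpq : p.HolderConjugate q := .conjExponent hp
  have hp0 : 0 < p := hpq.pos
  have hq0 : 0 < q := hpq.symm.pos
  have hsplit : ∀ x, w x * g x = w x ^ (1 / q) * (w x ^ (1 / p) * g x) := fun x => by
    rw [← mul_assoc, ← ENNReal.rpow_add_of_nonneg _ _ (by positivity) (by positivity),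
      one_div, one_div, hpq.symm.inv_add_inv_eq_one, ENNReal.rpow_one]
  have holder := ENNReal.lintegral_mul_le_Lp_mul_Lq μ hpq.symm (hw.pow_const (1 / q))
    ((hw.pow_const (1 / p)).mul hg)
  simp only [Pi.mul_apply, ← ENNReal.rpow_mul, ENNReal.mul_rpow_of_nonneg _ _ hp0.le, one_div,
    inv_mul_cancel₀ hq0.ne', inv_mul_cancel₀ hp0.ne', ENNReal.rpow_one] at holder
  calc (∫⁻ x, w x * g x ∂μ) ^ p
      ≤ ((∫⁻ x, w x ∂μ) ^ q⁻¹ * (∫⁻ x, w x * g x ^ p ∂μ) ^ p⁻¹) ^ p := by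
        gcongr
        simpa only [hsplit, one_div] using holder
    _ = (∫⁻ x, w x ∂μ) ^ (p - 1) * ∫⁻ x, w x * g x ^ p ∂μ := by
        rw [ENNReal.mul_rpow_of_nonneg _ _ hp0.le, ← ENNReal.rpow_mul, ← ENNReal.rpow_mul,
          inv_mul_cancel₀ hp0.ne', ENNReal.rpow_one, ← div_eq_inv_mul, hpq.div_conj_eq_sub_one]

/-- Young's convolution inequality `‖k ⋆ g‖_p ≤ ‖k‖₁ ‖g‖_p`, in `ℝ≥0∞`-valued form. -/
theorem lintegral_lintegral_sub_mul_rpow_le {G : Type*} [AddCommGroup G] [MeasurableSpace G]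
    [MeasurableAdd₂ G] [MeasurableNeg G] {μ : Measure G} [SFinite μ] [μ.IsAddLeftInvariant]
    [μ.IsNegInvariant] {p : ℝ} (hp : 1 < p) {k g : G → ℝ≥0∞}
    (hk : Measurable k) (hg : Measurable g) :
    ∫⁻ t, (∫⁻ y, k (t - y) * g y ∂μ) ^ p ∂μ ≤ (∫⁻ s, k s ∂μ) ^ p * ∫⁻ y, g y ^ p ∂μ := by
  have hk_sub : ∀ t, ∫⁻ y, k (t - y) ∂μ = ∫⁻ s, k s ∂μ := fun t =>
    (Measure.measurePreserving_sub_left μ t).lintegral_comp hk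
  have hkg : Measurable fun z : G × G => k (z.1 - z.2) * g z.2 ^ p :=
    (hk.comp (measurable_fst.sub measurable_snd)).mul ((hg.comp measurable_snd).pow_const p)
  calc ∫⁻ t, (∫⁻ y, k (t - y) * g y ∂μ) ^ p ∂μ
      ≤ ∫⁻ t, (∫⁻ s, k s ∂μ) ^ (p - 1) * ∫⁻ y, k (t - y) * g y ^ p ∂μ ∂μ := by
        refine lintegral_mono fun t => ?_
        rw [← hk_sub t]
        exact lintegral_mul_rpow_le hp (hk.comp (measurable_const.sub measurable_id)).aemeasurable
          hg.aemeasurable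
    _ = (∫⁻ s, k s ∂μ) ^ (p - 1) * ∫⁻ y, (∫⁻ t, k (t - y) ∂μ) * g y ^ p ∂μ := by
        rw [lintegral_const_mul _ hkg.lintegral_prod_right',
          lintegral_lintegral_swap hkg.aemeasurable]
        dsimp only
        congr 1
        exact lintegral_congr fun y => lintegral_mul_const _ (hk.comp (measurable_sub_const y))
    _ = (∫⁻ s, k s ∂μ) ^ p * ∫⁻ y, g y ^ p ∂μ := by
        simp only [fun y => (measurePreserving_sub_right μ y).lintegral_comp hk]
        rw [lintegral_const_mul _ (hg.pow_const p), ← mul_assoc]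
        congr 1
        simpa using (ENNReal.rpow_add_of_nonneg (x := ∫⁻ s, k s ∂μ) _ _ (by linarith : 0 ≤ p - 1)
          zero_le_one).symm

theorem ContinuousOn.memLp_top_restrict {X E : Type*} [TopologicalSpace X] [MeasurableSpace X]
    [OpensMeasurableSpace X] [NormedAddCommGroup E] [SecondCountableTopologyEither X E]
    {f : X → E} {K s : Set X} (hf : ContinuousOn f K) (hK : IsCompact K) (hKm : MeasurableSet K)
    (hsK : s ⊆ K) (μ : Measure X) : MemLp f ∞ (μ.restrict s) := by
  obtain ⟨C, hC⟩ := hK.exists_bound_of_continuousOn hf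
  exact (memLp_top_of_bound (hf.aestronglyMeasurable hKm) C
    ((ae_restrict_iff' hKm).2 (ae_of_all _ hC))).mono_measure (Measure.restrict_mono hsK le_rfl)

theorem MeasureTheory.MemLp.mul_norm_rpow {X E : Type*} [MeasurableSpace X] [NormedAddCommGroup E]
    {μ : Measure X} {p : ℝ≥0∞} (hp : p ≠ 0) {g : X → ℝ} {f : X → E} {s r : ℝ} (hs : 0 ≤ s)
    (hr : 0 ≤ r) (hg : MemLp g (p / ENNReal.ofReal s) μ) (hf : MemLp f p μ) :
    MemLp (fun x => g x * ‖f x‖ ^ r) (p / ENNReal.ofReal (s + r)) μ := by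
  have hfr : MemLp (fun x => ‖f x‖ ^ r) (p / ENNReal.ofReal r) μ := by
    simpa only [ENNReal.toReal_ofReal hr] using hf.norm_rpow_div (ENNReal.ofReal r)
  have hinv : ∀ t : ℝ, (p / ENNReal.ofReal t)⁻¹ = ENNReal.ofReal t / p := fun t =>
    ENNReal.inv_div (Or.inl ENNReal.ofReal_ne_top) (Or.inr hp)
  have : ENNReal.HolderTriple (p / ENNReal.ofReal s) (p / ENNReal.ofReal r)
      (p / ENNReal.ofReal (s + r)) :=
    ⟨by rw [hinv, hinv, hinv, ENNReal.div_add_div_same, ENNReal.ofReal_add hs hr]⟩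
  exact hfr.mul hg

section RiemannLiouville

variable {d : ℕ}

/-- For `t, y ∈ (a, b)` only the values of the kernel of `RL` on `(0, b - a)` matter, and there it
is integrable. -/
noncomputable def truncRLKernel (T β : ℝ) : ℝ → ℝ≥0∞ :=
  (Ioo 0 T).indicator fun s => ENNReal.ofReal (s ^ (β - 1))

theorem measurable_truncRLKernel (T β : ℝ) : Measurable (truncRLKernel T β) :=
  ((measurable_id.pow_const _).ennreal_ofReal).indicator measurableSet_Ioo

theorem lintegral_truncRLKernel_lt_top (T : ℝ) {β : ℝ} (hβ : 0 < β) :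
    ∫⁻ s, truncRLKernel T β s < ∞ := by
  rw [truncRLKernel, lintegral_indicator measurableSet_Ioo]
  rcases le_or_gt T 0 with hT | hT
  · simp [Ioo_eq_empty_of_le hT]
  exact ((intervalIntegral.integrableOn_Ioo_rpow_iff hT).2 (by linarith)).lintegral_lt_top

theorem RL_congr_ae {f g : ℝ → EuclideanSpace ℝ (Fin d)} (hfg : f =ᵐ[volume] g) (a β : ℝ) :
    RL a β f = RL a β g := by
  funext t
  unfold RL
  congr 1
  refine integral_congr_ae (ae_restrict_of_ae ?_)
  filter_upwards [hfg] with y hy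
  rw [hy]

theorem RL_indicator_Ioo {f : ℝ → EuclideanSpace ℝ (Fin d)} {a b t : ℝ} (htb : t ≤ b) (β : ℝ) :
    RL a β ((Ioo a b).indicator f) t = RL a β f t := by
  unfold RL
  congr 1
  refine setIntegral_congr_fun measurableSet_Ioo fun y hy => ?_
  have hy' : y ∈ Ioo a b := ⟨hy.1, hy.2.trans_le htb⟩
  rw [indicator_of_mem hy']

theorem RL_aestronglyMeasurable {f : ℝ → EuclideanSpace ℝ (Fin d)} (hf : StronglyMeasurable f)
    (a β : ℝ) (μ : Measure ℝ) [SFinite μ] : AEStronglyMeasurable (RL a β f) μ := by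
  set S : Set (ℝ × ℝ) := {q | a < q.2 ∧ q.2 < q.1}
  have hS : MeasurableSet S :=
    (measurableSet_lt measurable_const measurable_snd).inter
      (measurableSet_lt measurable_snd measurable_fst)
  have hF : StronglyMeasurable (S.indicator fun q => (q.1 - q.2) ^ (β - 1) • f q.2) :=
    (((measurable_fst.sub measurable_snd).pow_const _).stronglyMeasurable.smul
      (hf.comp_measurable measurable_snd)).indicator hS
  have hRL : RL a β f = fun t => (1 / Real.Gamma β) •
      ∫ y, S.indicator (fun q => (q.1 - q.2) ^ (β - 1) • f q.2) (t, y) := by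
    funext t
    rw [RL, ← integral_indicator measurableSet_Ioo]
    rfl
  rw [hRL]
  exact (hF.aestronglyMeasurable.integral_prod_right' (ν := volume)).const_smul (1 / Real.Gamma β)

theorem enorm_RL_le (f : ℝ → EuclideanSpace ℝ (Fin d)) {a b t : ℝ} (htb : t ≤ b) (β : ℝ) :
    ‖RL a β f t‖ₑ ≤ ‖1 / Real.Gamma β‖ₑ * ∫⁻ y, truncRLKernel (b - a) β (t - y) * ‖f y‖ₑ := by
  rw [RL, enorm_smul]
  gcongr
  calc ‖∫ y in Ioo a t, (t - y) ^ (β - 1) • f y‖ₑ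
      ≤ ∫⁻ y in Ioo a t, ‖(t - y) ^ (β - 1) • f y‖ₑ := enorm_integral_le_lintegral_enorm _
    _ = ∫⁻ y in Ioo a t, truncRLKernel (b - a) β (t - y) * ‖f y‖ₑ := by
        refine setLIntegral_congr_fun measurableSet_Ioo fun y hy => ?_
        have hty : t - y ∈ Ioo 0 (b - a) := ⟨by linarith [hy.2], by linarith [hy.1]⟩
        rw [enorm_smul, truncRLKernel, indicator_of_mem hty,
          Real.enorm_eq_ofReal (Real.rpow_nonneg hty.1.le _)]
    _ ≤ ∫⁻ y, truncRLKernel (b - a) β (t - y) * ‖f y‖ₑ := setLIntegral_le_lintegral _ _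

theorem setLIntegral_enorm_RL_rpow_le {f : ℝ → EuclideanSpace ℝ (Fin d)} (hf : StronglyMeasurable f)
    {p : ℝ} (hp : 1 < p) (a b β : ℝ) :
    ∫⁻ t in Ioo a b, ‖RL a β f t‖ₑ ^ p ≤
      ‖1 / Real.Gamma β‖ₑ ^ p * ((∫⁻ s, truncRLKernel (b - a) β s) ^ p * ∫⁻ y, ‖f y‖ₑ ^ p) := by
  have hp0 : 0 ≤ p := by linarith
  calc ∫⁻ t in Ioo a b, ‖RL a β f t‖ₑ ^ p
      ≤ ∫⁻ t in Ioo a b, ‖1 / Real.Gamma β‖ₑ ^ p *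
          (∫⁻ y, truncRLKernel (b - a) β (t - y) * ‖f y‖ₑ) ^ p := by
        refine setLIntegral_mono' measurableSet_Ioo fun t ht => ?_
        rw [← ENNReal.mul_rpow_of_nonneg _ _ hp0]
        gcongr
        exact enorm_RL_le f ht.2.le β
    _ ≤ ∫⁻ t, ‖1 / Real.Gamma β‖ₑ ^ p *
          (∫⁻ y, truncRLKernel (b - a) β (t - y) * ‖f y‖ₑ) ^ p := setLIntegral_le_lintegral _ _
    _ ≤ ‖1 / Real.Gamma β‖ₑ ^ p *
          ((∫⁻ s, truncRLKernel (b - a) β s) ^ p * ∫⁻ y, ‖f y‖ₑ ^ p) := by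
        rw [lintegral_const_mul' _ _ (ENNReal.rpow_ne_top_of_nonneg hp0 enorm_ne_top)]
        gcongr
        exact lintegral_lintegral_sub_mul_rpow_le hp (measurable_truncRLKernel _ _)
          hf.measurable.enorm

theorem memLp_RL {f : ℝ → EuclideanSpace ℝ (Fin d)} {p : ℝ} (hp : 1 < p)
    (hf : MemLp f (ENNReal.ofReal p) volume) (a b : ℝ) {β : ℝ} (hβ : 0 < β) :
    MemLp (RL a β f) (ENNReal.ofReal p) (volume.restrict (Ioo a b)) := by
  obtain ⟨g, hg, hfg⟩ := hf.1
  have hp0 : ENNReal.ofReal p ≠ 0 := ENNReal.ofReal_ne_zero_iff.2 (by linarith)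
  have hg_lt := lintegral_rpow_enorm_lt_top_of_eLpNorm_lt_top hp0 ENNReal.ofReal_ne_top
    (hf.ae_eq hfg).2
  rw [ENNReal.toReal_ofReal (by linarith)] at hg_lt
  rw [RL_congr_ae hfg]
  refine ⟨RL_aestronglyMeasurable hg a β _, ?_⟩
  rw [eLpNorm_lt_top_iff_lintegral_rpow_enorm_lt_top hp0 ENNReal.ofReal_ne_top,
    ENNReal.toReal_ofReal (by linarith)]
  refine (setLIntegral_enorm_RL_rpow_le hg hp a b β).trans_lt ?_
  have hk := lintegral_truncRLKernel_lt_top (b - a) hβ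
  exact ENNReal.mul_lt_top (ENNReal.rpow_lt_top_of_nonneg (by linarith) enorm_ne_top)
    (ENNReal.mul_lt_top (ENNReal.rpow_lt_top_of_nonneg (by linarith) hk.ne) hg_lt)

theorem memLp_RL_of_restrict {f : ℝ → EuclideanSpace ℝ (Fin d)} {p : ℝ} (hp : 1 < p) {a b : ℝ}
    (hf : MemLp f (ENNReal.ofReal p) (volume.restrict (Ioo a b))) {β : ℝ} (hβ : 0 < β) :
    MemLp (RL a β f) (ENNReal.ofReal p) (volume.restrict (Ioo a b)) := by
  have h := memLp_RL hp ((memLp_indicator_iff_restrict measurableSet_Ioo).2 hf) a b hβ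
  refine h.ae_eq ?_
  filter_upwards [ae_restrict_mem measurableSet_Ioo] with t ht
  exact RL_indicator_Ioo ht.2.le β

end RiemannLiouville

theorem IsW1p.continuousOn {d : ℕ} {a b p : ℝ} {u v : ℝ → EuclideanSpace ℝ (Fin d)} (hp : 1 ≤ p)
    (h : IsW1p a b p u v) : ContinuousOn u (Icc a b) := by
  have hv : IntegrableOn v (Icc a b) := by
    rw [integrableOn_Icc_iff_integrableOn_Ioo]
    exact h.1.integrable (by simpa using hp)
  refine ((continuousOn_const (c := u a)).add (intervalIntegral.continuousOn_primitive hv)).congr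
    fun t ht => ?_
  rw [h.2 t ht, Pi.add_apply, integral_Ioc_eq_integral_Ioo]

theorem MemP.memLp_comp {d : ℕ} {a b p M : ℝ} (hp : 0 < p) (hM : 0 < M)
    {P : EuclideanSpace ℝ (Fin d) → EuclideanSpace ℝ (Fin d) → EuclideanSpace ℝ (Fin d) →
      EuclideanSpace ℝ (Fin d) → ℝ → ℝ}
    (hP : MemP a b p M P) {x₁ x₂ x₃ x₄ : ℝ → EuclideanSpace ℝ (Fin d)}
    (h₁ : ContinuousOn x₁ (Icc a b)) (h₂ : MemLp x₂ (ENNReal.ofReal p) (volume.restrict (Ioo a b)))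
    (h₃ : MemLp x₃ (ENNReal.ofReal p) (volume.restrict (Ioo a b)))
    (h₄ : MemLp x₄ (ENNReal.ofReal p) (volume.restrict (Ioo a b))) :
    MemLp (fun t => P (x₁ t) (x₂ t) (x₃ t) (x₄ t) t) (ENNReal.ofReal M)
      (volume.restrict (Ioo a b)) := by
  obtain ⟨N, c, d₂, d₃, d₄, hc, -, hdeg, hPeq⟩ := hP
  have hp0 : ENNReal.ofReal p ≠ 0 := by simpa using hp
  have hP_ae : (fun t => P (x₁ t) (x₂ t) (x₃ t) (x₄ t) t) =ᵐ[volume.restrict (Ioo a b)]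
      fun t => ∑ k ∈ Finset.range (N + 1),
        c k (x₁ t) t * ‖x₂ t‖ ^ d₂ k * ‖x₃ t‖ ^ d₃ k * ‖x₄ t‖ ^ d₄ k := by
    filter_upwards [ae_restrict_mem measurableSet_Ioo] with t ht
    exact hPeq _ _ _ _ t (Ioo_subset_Icc_self ht)
  refine MemLp.ae_eq hP_ae.symm (memLp_finsetSum _ fun k hk => ?_)
  obtain ⟨hd₂, hd₃, hd₄, hdeg_le⟩ := hdeg k (Finset.mem_range_succ_iff.1 hk)
  -- the bounded coefficient lies in `L^∞ = L^(p/0)`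
  have hck : MemLp (fun t => c k (x₁ t) t) (ENNReal.ofReal p / ENNReal.ofReal 0)
      (volume.restrict (Ioo a b)) := by
    rw [ENNReal.ofReal_zero, ENNReal.div_zero hp0]
    exact ((hc k (Finset.mem_range_succ_iff.1 hk)).comp (h₁.prodMk continuousOn_id)
      fun t ht => ⟨mem_univ _, ht⟩).memLp_top_restrict isCompact_Icc measurableSet_Icc
        Ioo_subset_Icc_self volume
  have hterm := ((hck.mul_norm_rpow hp0 le_rfl hd₂ h₂).mul_norm_rpow hp0 (by positivity) hd₃
    h₃).mul_norm_rpow hp0 (by positivity) hd₄ h₄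
  refine hterm.mono_exponent ?_
  rw [zero_add, ENNReal.le_div_iff_mul_le (Or.inr hp0) (Or.inl ENNReal.ofReal_ne_top),
    ← ENNReal.ofReal_mul hM.le]
  exact ENNReal.ofReal_le_ofReal ((le_div_iff₀' hM).mp hdeg_le)

theorem memP_comp_memLM_general {d : ℕ} (a b : ℝ)
    (p : ℝ) (hp : 1 < p) (α : ℝ) (hα : 0 < α) (hα1 : α < 1)
    (M : ℝ) (hM : 1 ≤ M)
    (P : EuclideanSpace ℝ (Fin d) → EuclideanSpace ℝ (Fin d) → EuclideanSpace ℝ (Fin d) →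
      EuclideanSpace ℝ (Fin d) → ℝ → ℝ)
    (hP : MemP a b p M P)
    (u v : ℝ → EuclideanSpace ℝ (Fin d)) (huv : IsW1p a b p u v) :
    MemLp (fun t => P (u t) (RL a α u t) (v t) (RL a (1 - α) v t) t)
      (ENNReal.ofReal M) (volume.restrict (Ioo a b)) := by
  have hu : ContinuousOn u (Icc a b) := huv.continuousOn hp.le
  have hu_p : MemLp u (ENNReal.ofReal p) (volume.restrict (Ioo a b)) :=
    (hu.memLp_top_restrict isCompact_Icc measurableSet_Icc Ioo_subset_Icc_self volume).mono_exponent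
      le_top
  exact hP.memLp_comp (by linarith) (by linarith) hu (memLp_RL_of_restrict hp hu_p hα) huv.1
    (memLp_RL_of_restrict hp huv.1 (by linarith))

/-- If `M ≥ 1` and `P ∈ 𝒫_M`, then for every `u ∈ W^{1,p}` (with derivative `u̇ = v`)
the function `t ↦ P(u(t), I^α[u](t), u̇(t), ᶜD^α[u](t), t)` belongs to `L^M(a,b;ℝ)`,
where `ᶜD^α[u] = I^{1-α}[u̇]` is the left Caputo derivative. -/
theorem memP_comp_memLM {d : ℕ} (hd : 1 ≤ d) (a b : ℝ) (hab : a < b)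
    (p : ℝ) (hp : 1 < p) (α : ℝ) (hα : 0 < α) (hα1 : α < 1)
    (M : ℝ) (hM : 1 ≤ M)
    (P : EuclideanSpace ℝ (Fin d) → EuclideanSpace ℝ (Fin d) → EuclideanSpace ℝ (Fin d) →
      EuclideanSpace ℝ (Fin d) → ℝ → ℝ)
    (hP : MemP a b p M P)
    (u v : ℝ → EuclideanSpace ℝ (Fin d)) (huv : IsW1p a b p u v) :
    MemLp (fun t => P (u t) (RL a α u t) (v t) (RL a (1 - α) v t) t)
      (ENNReal.ofReal M) (volume.restrict (Ioo a b)) :=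
  memP_comp_memLM_general a b p hp α hα hα1 M hM P hP u v huv
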